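/- arXiv:math/9905055 — 2 statements merged into one kernel-verified Lean document; each statement's English description precedes it below -/
import Mathlib

section
/- Suppose that G has no proper subgroup of finite index. Then every G-prime ideal of R is a prime ideal of R. -/
/-- An ideal (i.e. left ideal) of a not-necessarily-commutative ring is two-sided. -/
def IsTwoSidedI {R : Type*} [Ring R] (I : Ideal R) : Prop :=
  ∀ a ∈ I, ∀ r : R, a * r ∈ I

/-- A (two-sided) ideal `P` is prime: it is proper and `IJ ⊆ P` forces `I ⊆ P` or `J ⊆ P`
for all two-sided ideals `I`, `J`. -/
def IsPrimeTS {R : Type*} [Ring R] (P : Ideal R) : Prop :=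
  IsTwoSidedI P ∧ P ≠ ⊤ ∧
    ∀ I J : Ideal R, IsTwoSidedI I → IsTwoSidedI J →
      (∀ a ∈ I, ∀ b ∈ J, a * b ∈ P) → I ≤ P ∨ J ≤ P

/-- `J` is `X`-semiprime: an intersection of a collection of `X`-prime ideals. -/
def IsXSemiprime {R : Type*} [Ring R] (𝒳 : Set (Ideal R)) (J : Ideal R) : Prop :=
  ∃ T ⊆ 𝒳, J = sInf T


/-- The translate of an ideal under the ring automorphism given by a group element
(expressed as a preimage, which for a group action gives the same family of translates). -/
def gTrans {R : Type*} [Ring R] {G : Type*} [Group G] [MulSemiringAction G R]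
    (g : G) (I : Ideal R) : Ideal R :=
  Ideal.comap (MulSemiringAction.toRingHom G R g) I

/-- A `G`-ideal: a two-sided ideal stable under the action of `G`. -/
def IsGIdeal {R : Type*} [Ring R] (G : Type*) [Group G] [MulSemiringAction G R]
    (I : Ideal R) : Prop :=
  IsTwoSidedI I ∧ ∀ g : G, gTrans g I = I

/-- A `G`-prime ideal: a proper `G`-ideal `Q` with `IJ ⊆ Q → I ⊆ Q ∨ J ⊆ Q`
for all `G`-ideals `I`, `J`. -/
def IsGPrime {R : Type*} [Ring R] (G : Type*) [Group G] [MulSemiringAction G R]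
    (Q : Ideal R) : Prop :=
  IsGIdeal G Q ∧ Q ≠ ⊤ ∧
    ∀ I J : Ideal R, IsGIdeal G I → IsGIdeal G J →
      (∀ a ∈ I, ∀ b ∈ J, a * b ∈ Q) → I ≤ Q ∨ J ≤ Q

/-- `(I : G) = ⋂_{g ∈ G} g(I)`, the largest `G`-ideal contained in `I`. -/
noncomputable def resGIdeal {R : Type*} [Ring R] (G : Type*) [Group G] [MulSemiringAction G R]
    (I : Ideal R) : Ideal R :=
  ⨅ g : G, gTrans g I

/-! By noetherian induction, `Q` contains a power of the intersection of finitely many primes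
containing it. Hence every prime over `Q` contains one of these, so there are only finitely many
minimal primes over `Q`, and every prime over `Q` contains a minimal one. `G` permutes the minimal
primes, so each has a finite orbit, i.e. a stabilizer of finite index, which must be all of `G`:
the minimal primes are `G`-ideals. A power of their intersection lies in `Q`, so `G`-primeness
puts one of them, `M`, inside `Q`, and `Q = M` is prime. -/

open scoped Pointwise

section TwoSided

variable {R : Type*} [Ring R]

theorem isTwoSidedI_iff {I : Ideal R} : IsTwoSidedI I ↔ I.IsTwoSided :=
  ⟨fun h => ⟨fun b ha => h _ ha b⟩, fun _ _ ha r => I.mul_mem_right r ha⟩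

theorem IsTwoSidedI.sup {I J : Ideal R} (hI : IsTwoSidedI I) (hJ : IsTwoSidedI J) :
    IsTwoSidedI (I ⊔ J) := by
  intro x hx r
  obtain ⟨y, hy, z, hz, rfl⟩ := Submodule.mem_sup.1 hx
  exact Submodule.mem_sup.2 ⟨y * r, hI y hy r, z * r, hJ z hz r, (add_mul y z r).symm⟩

structure IsIdealFamily (p : Ideal R → Prop) : Prop where
  top : p ⊤
  mul {I J : Ideal R} : p I → p J → p (I * J)
  inf {I J : Ideal R} : p I → p J → p (I ⊓ J)
  isTwoSided {I : Ideal R} : p I → I.IsTwoSided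

def IsPrimeFor (p : Ideal R → Prop) (P : Ideal R) : Prop :=
  P ≠ ⊤ ∧ ∀ I J : Ideal R, p I → p J → I * J ≤ P → I ≤ P ∨ J ≤ P

namespace IsIdealFamily

variable {p : Ideal R → Prop} (hp : IsIdealFamily p)
include hp

theorem pow {N : Ideal R} (hN : p N) (n : ℕ) : p (N ^ n) := by
  induction n with
  | zero => simpa only [Submodule.pow_zero, Ideal.one_eq_top] using hp.top
  | succ n ih => exact hp.mul ih hN

theorem sInf {S : Set (Ideal R)} (hS : S.Finite) (hSp : ∀ I ∈ S, p I) : p (sInf S) := by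
  induction S, hS using Set.Finite.induction_on with
  | empty => simpa only [sInf_empty] using hp.top
  | @insert I S _ _ ih =>
    rw [sInf_insert]
    exact hp.inf (hSp I (Set.mem_insert I S)) (ih fun J hJ => hSp J (Set.mem_insert_of_mem I hJ))

end IsIdealFamily

namespace IsPrimeFor

variable {p : Ideal R → Prop} {P : Ideal R} (hP : IsPrimeFor p P)
include hP

theorem le_of_pow_le (hp : IsIdealFamily p) {N : Ideal R} (hN : p N) {n : ℕ}
    (h : N ^ n ≤ P) : N ≤ P := by
  induction n with
  | zero =>
    rw [Submodule.pow_zero, Ideal.one_eq_top, top_le_iff] at h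
    exact absurd h hP.1
  | succ n ih => exact (hP.2 _ _ (hp.pow hN n) hN h).elim ih id

theorem exists_le_of_sInf_le (hp : IsIdealFamily p) {S : Set (Ideal R)} (hS : S.Finite)
    (hSp : ∀ I ∈ S, p I) (h : sInf S ≤ P) : ∃ I ∈ S, I ≤ P := by
  induction S, hS using Set.Finite.induction_on with
  | empty => exact absurd (top_le_iff.1 (sInf_empty (α := Ideal R) ▸ h)) hP.1
  | @insert I S _ hS ih =>
    have hI : p I := hSp I (Set.mem_insert I S)
    have hSp' : ∀ J ∈ S, p J := fun J hJ => hSp J (Set.mem_insert_of_mem I hJ)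
    have := hp.isTwoSided hI
    rw [sInf_insert] at h
    rcases hP.2 _ _ hI (hp.sInf hS hSp') (Ideal.mul_le_inf.trans h) with hIP | hSP
    · exact ⟨I, Set.mem_insert I S, hIP⟩
    · obtain ⟨J, hJ, hJP⟩ := ih hSp' hSP
      exact ⟨J, Set.mem_insert_of_mem I hJ, hJP⟩

theorem exists_le_of_sInf_pow_le (hp : IsIdealFamily p) {S : Set (Ideal R)} (hS : S.Finite)
    (hSp : ∀ I ∈ S, p I) {n : ℕ} (h : sInf S ^ n ≤ P) : ∃ I ∈ S, I ≤ P :=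
  hP.exists_le_of_sInf_le hp hS hSp (hP.le_of_pow_le hp (hp.sInf hS hSp) h)

end IsPrimeFor

theorem isIdealFamily_isTwoSidedI : IsIdealFamily (IsTwoSidedI (R := R)) where
  top := fun _ _ _ => trivial
  mul := fun _ hJ => by
    have := isTwoSidedI_iff.1 hJ
    exact isTwoSidedI_iff.2 inferInstance
  inf := fun hI hJ a ha r => ⟨hI a ha.1 r, hJ a ha.2 r⟩
  isTwoSided := isTwoSidedI_iff.1

theorem IsPrimeTS.isPrimeFor {P : Ideal R} (hP : IsPrimeTS P) : IsPrimeFor IsTwoSidedI P :=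
  ⟨hP.2.1, fun I J hI hJ h => hP.2.2 I J hI hJ (Ideal.mul_le.1 h)⟩

theorem exists_lt_lt_mul_le_of_not_isPrimeTS {A : Ideal R} (hA : IsTwoSidedI A) (hA' : A ≠ ⊤)
    (h : ¬ IsPrimeTS A) :
    ∃ B C : Ideal R, IsTwoSidedI B ∧ IsTwoSidedI C ∧ A < B ∧ A < C ∧ B * C ≤ A := by
  obtain ⟨I, J, hI, hJ, hIJ, hIA, hJA⟩ : ∃ I J : Ideal R, IsTwoSidedI I ∧ IsTwoSidedI J ∧
      (∀ a ∈ I, ∀ b ∈ J, a * b ∈ A) ∧ ¬ I ≤ A ∧ ¬ J ≤ A := by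
    simpa only [IsPrimeTS, hA, hA', ne_eq, not_false_eq_true, true_and, not_forall, not_or,
      exists_prop] using h
  have := isTwoSidedI_iff.1 hA
  refine ⟨A ⊔ I, A ⊔ J, hA.sup hI, hA.sup hJ, left_lt_sup.2 hIA, left_lt_sup.2 hJA, ?_⟩
  rw [Ideal.mul_sup, Ideal.sup_mul, Ideal.sup_mul]
  exact sup_le (sup_le Ideal.mul_le_left Ideal.mul_le_right)
    (sup_le Ideal.mul_le_left (Ideal.mul_le.2 hIJ))

theorem exists_finite_primes_sInf_pow_le [IsNoetherianRing R] (A : Ideal R) (hA : IsTwoSidedI A)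
    (hA' : A ≠ ⊤) : ∃ S : Set (Ideal R), S.Finite ∧ (∀ P ∈ S, IsPrimeTS P ∧ A ≤ P) ∧
      ∃ n : ℕ, sInf S ^ n ≤ A := by
  induction A using IsNoetherian.induction with
  | _ A ih =>
  by_cases hprime : IsPrimeTS A
  · refine ⟨{A}, Set.finite_singleton A, by simpa using hprime, 1, ?_⟩
    rw [sInf_singleton, Submodule.pow_one]
  obtain ⟨B, C, hB, hC, hAB, hAC, hBC⟩ := exists_lt_lt_mul_le_of_not_isPrimeTS hA hA' hprime
  have hB' : B ≠ ⊤ := fun h => hAC.not_ge (by simpa [h] using hBC)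
  have hC' : C ≠ ⊤ := fun h => by
    have := isTwoSidedI_iff.1 hB
    exact hAB.not_ge (by simpa [h, Ideal.mul_top] using hBC)
  obtain ⟨S, hS, hSB, m, hmB⟩ := ih B hAB hB hB'
  obtain ⟨T, hT, hTC, n, hnC⟩ := ih C hAC hC hC'
  have hST : ∀ P ∈ S ∪ T, IsPrimeTS P ∧ A ≤ P := by
    rintro P (hP | hP)
    · exact ⟨(hSB P hP).1, hAB.le.trans (hSB P hP).2⟩
    · exact ⟨(hTC P hP).1, hAC.le.trans (hTC P hP).2⟩
  refine ⟨S ∪ T, hS.union hT, hST, m + n, ?_⟩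
  have := isIdealFamily_isTwoSidedI.isTwoSided
    (isIdealFamily_isTwoSidedI.sInf (hS.union hT) fun P hP => (hST P hP).1.1)
  calc sInf (S ∪ T) ^ (m + n) = sInf (S ∪ T) ^ m * sInf (S ∪ T) ^ n := Ideal.IsTwoSided.pow_add ..
    _ ≤ sInf S ^ m * sInf T ^ n := Ideal.mul_mono
        (Ideal.pow_right_mono (sInf_le_sInf Set.subset_union_left) m)
        (Ideal.pow_right_mono (sInf_le_sInf Set.subset_union_right) n)
    _ ≤ B * C := Ideal.mul_mono hmB hnC
    _ ≤ A := hBC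

end TwoSided

theorem Minimal.mem_of_forall_exists_le {α : Type*} [PartialOrder α] {t : α → Prop}
    {S : Set α} (hSt : ∀ y ∈ S, t y) (htS : ∀ x, t x → ∃ y ∈ S, y ≤ x) {m : α}
    (hm : Minimal t m) : m ∈ S := by
  obtain ⟨y, hy, hym⟩ := htS m hm.1
  exact hm.eq_of_le (hSt y hy) hym ▸ hy

theorem Set.Finite.exists_minimal_le_of_forall_exists_le {α : Type*} [PartialOrder α]
    {t : α → Prop} {S : Set α} (hS : S.Finite) (hSt : ∀ y ∈ S, t y)
    (htS : ∀ x, t x → ∃ y ∈ S, y ≤ x) {x : α} (hx : t x) : ∃ m ≤ x, Minimal t m := by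
  obtain ⟨y, hy, hyx⟩ := htS x hx
  obtain ⟨m, hmy, hm⟩ := hS.exists_le_minimal hy
  refine ⟨m, hmy.trans hyx, hSt m hm.1, fun z hz hzm => ?_⟩
  obtain ⟨w, hw, hwz⟩ := htS z hz
  exact (hm.le_of_le hw (hwz.trans hzm)).trans hwz

theorem MulAction.smul_eq_self_of_finite_orbit {G X : Type*} [Group G] [MulAction G X]
    (hG : ∀ K : Subgroup G, K.index ≠ 0 → K = ⊤) {x : X} (hx : (orbit G x).Finite) (g : G) :
    g • x = x := by
  have hindex : (stabilizer G x).index ≠ 0 := by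
    rw [index_stabilizer]
    exact ((Set.ncard_pos hx).2 (nonempty_orbit x)).ne'
  exact mem_stabilizer_iff.1 (hG _ hindex ▸ Subgroup.mem_top g)

section Action

variable {R : Type*} [Ring R] {G : Type*} [Group G] [MulSemiringAction G R]

theorem gTrans_eq_inv_smul (g : G) (I : Ideal R) : gTrans g I = g⁻¹ • I := by
  ext x
  exact Ideal.mem_inv_pointwise_smul_iff.symm

theorem Ideal.pointwise_smul_mul (g : G) (I J : Ideal R) : g • (I * J) = g • I * g • J := by
  apply le_antisymm
  · rw [Ideal.pointwise_smul_subset_iff, Ideal.mul_le]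
    intro a ha b hb
    rw [Ideal.mem_inv_pointwise_smul_iff, smul_mul']
    exact Ideal.mul_mem_mul (Ideal.smul_mem_pointwise_smul g a I ha)
      (Ideal.smul_mem_pointwise_smul g b J hb)
  · rw [Ideal.mul_le]
    intro a ha b hb
    rw [Ideal.mem_pointwise_smul_iff_inv_smul_mem] at ha hb ⊢
    rw [smul_mul']
    exact Ideal.mul_mem_mul ha hb

theorem IsTwoSidedI.smul {I : Ideal R} (hI : IsTwoSidedI I) (g : G) : IsTwoSidedI (g • I) := by
  intro a ha r
  rw [Ideal.mem_pointwise_smul_iff_inv_smul_mem] at ha ⊢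
  rw [smul_mul']
  exact hI _ ha _

theorem IsPrimeTS.smul {P : Ideal R} (hP : IsPrimeTS P) (g : G) : IsPrimeTS (g • P) := by
  refine ⟨hP.1.smul g, fun h => hP.2.1 ?_, fun I J hI hJ hIJ => ?_⟩
  · rw [← inv_smul_smul g P, h, Ideal.pointwise_smul_def, Ideal.map_top]
  · simp only [Ideal.subset_pointwise_smul_iff]
    refine hP.isPrimeFor.2 _ _ (hI.smul _) (hJ.smul _) ?_
    rw [← Ideal.pointwise_smul_mul, ← Ideal.subset_pointwise_smul_iff]
    exact Ideal.mul_le.2 hIJ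

theorem isGIdeal_iff {I : Ideal R} : IsGIdeal G I ↔ IsTwoSidedI I ∧ ∀ g : G, g • I = I := by
  simp only [IsGIdeal, gTrans_eq_inv_smul]
  exact and_congr_right fun _ => ⟨fun h g => by simpa using h g⁻¹, fun h g => h g⁻¹⟩

theorem isIdealFamily_isGIdeal : IsIdealFamily (IsGIdeal G (R := R)) where
  top := ⟨isIdealFamily_isTwoSidedI.top, fun _ => Ideal.comap_top⟩
  mul := fun hI hJ => isGIdeal_iff.2 ⟨isIdealFamily_isTwoSidedI.mul hI.1 hJ.1, fun g => by
    rw [Ideal.pointwise_smul_mul, (isGIdeal_iff.1 hI).2, (isGIdeal_iff.1 hJ).2]⟩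
  inf := fun hI hJ => ⟨isIdealFamily_isTwoSidedI.inf hI.1 hJ.1, fun g =>
    (Ideal.comap_inf _ _ _).trans (congrArg₂ (· ⊓ ·) (hI.2 g) (hJ.2 g))⟩
  isTwoSided := fun hI => isTwoSidedI_iff.1 hI.1

theorem IsGPrime.isPrimeFor {Q : Ideal R} (hQ : IsGPrime G Q) : IsPrimeFor (IsGIdeal G) Q :=
  ⟨hQ.2.1, fun I J hI hJ h => hQ.2.2 I J hI hJ (Ideal.mul_le.1 h)⟩

theorem Minimal.smul_of_isPrimeTS {Q M : Ideal R} (hQ : ∀ g : G, g • Q = Q)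
    (hM : Minimal (fun P => IsPrimeTS P ∧ Q ≤ P) M) (g : G) :
    Minimal (fun P => IsPrimeTS P ∧ Q ≤ P) (g • M) := by
  have hprimes : ∀ (g : G) (P : Ideal R), IsPrimeTS P ∧ Q ≤ P → IsPrimeTS (g • P) ∧ Q ≤ g • P :=
    fun g P hP => ⟨hP.1.smul g, hQ g ▸ Ideal.pointwise_smul_le_pointwise_smul_iff.2 hP.2⟩
  refine ⟨hprimes g M hM.1, fun P hP hPM => ?_⟩
  rw [Ideal.subset_pointwise_smul_iff] at hPM
  exact Ideal.pointwise_smul_subset_iff.2 (hM.2 (hprimes g⁻¹ P hP) hPM)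

end Action

theorem stmt_6_general {R : Type*} [Ring R] [IsNoetherianRing R]
    (G : Type*) [Group G] [MulSemiringAction G R]
    (hG : ∀ K : Subgroup G, K.index ≠ 0 → K = ⊤) :
    ∀ Q : Ideal R, IsGPrime G Q → IsPrimeTS Q := by
  intro Q hQ
  have hQG := (isGIdeal_iff.1 hQ.1).2
  obtain ⟨S, hS, hSprime, n, hSn⟩ := exists_finite_primes_sInf_pow_le Q hQ.1.1 hQ.2.1
  have hcover : ∀ P, IsPrimeTS P ∧ Q ≤ P → ∃ P' ∈ S, P' ≤ P := fun P hP =>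
    hP.1.isPrimeFor.exists_le_of_sInf_pow_le isIdealFamily_isTwoSidedI hS
      (fun P' hP' => (hSprime P' hP').1.1) (hSn.trans hP.2)
  set 𝓜 := {M | Minimal (fun P => IsPrimeTS P ∧ Q ≤ P) M}
  have h𝓜S : 𝓜 ⊆ S := fun M hM => hM.mem_of_forall_exists_le hSprime hcover
  have h𝓜G : ∀ M ∈ 𝓜, IsGIdeal G M := fun M hM => isGIdeal_iff.2 ⟨hM.1.1.1,
    MulAction.smul_eq_self_of_finite_orbit hG <| hS.subset <| by
      rintro _ ⟨g, rfl⟩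
      exact h𝓜S (hM.smul_of_isPrimeTS hQG g)⟩
  have hsInf : sInf 𝓜 ≤ sInf S := le_sInf fun P hP => by
    obtain ⟨M, hMP, hM⟩ := hS.exists_minimal_le_of_forall_exists_le hSprime hcover (hSprime P hP)
    exact (sInf_le (show M ∈ 𝓜 from hM)).trans hMP
  obtain ⟨M, hM, hMQ⟩ := hQ.isPrimeFor.exists_le_of_sInf_pow_le isIdealFamily_isGIdeal
    (hS.subset h𝓜S) h𝓜G ((Ideal.pow_right_mono hsInf n).trans hSn)
  exact le_antisymm hM.1.2 hMQ ▸ hM.1.1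

/-- 1.12: if `G` has no proper subgroup of finite index, then every
`G`-prime ideal of `R` is prime. -/
theorem stmt_6 {R : Type*} [Ring R] [IsNoetherianRing R] [IsNoetherianRing Rᵐᵒᵖ]
    (G : Type*) [Group G] [MulSemiringAction G R]
    (hG : ∀ K : Subgroup G, K.index ≠ 0 → K = ⊤) :
    ∀ Q : Ideal R, IsGPrime G Q → IsPrimeTS Q :=
  stmt_6_general G hG
end

section
/- The assignment M ↦ (M : 𝒢) is an H-equivariant topological quotient map from max R onto 𝒢-max R. -/
open MvPolynomial

/-- The action of `h ∈ (kˣ)ⁿ` on `k[y₁,…,yₙ]` by `yᵢ ↦ hᵢ yᵢ`. -/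
noncomputable def tact {k : Type*} [CommSemiring k] {n : ℕ} (h : Fin n → kˣ) :
    MvPolynomial (Fin n) k →ₐ[k] MvPolynomial (Fin n) k :=
  aeval fun i => (h i : k) • X i

/-- `(I : G) = ⋂_{g ∈ G} g(I)` for a subgroup `G` of the torus `(kˣ)ⁿ`. -/
noncomputable def resT {k : Type*} [CommSemiring k] {n : ℕ} (G : Subgroup (Fin n → kˣ))
    (I : Ideal (MvPolynomial (Fin n) k)) : Ideal (MvPolynomial (Fin n) k) :=
  ⨅ g ∈ G, Ideal.comap (tact g) I

/-- `spec_w R`: primes `P` with `P ∩ {y₁,…,yₙ} = {yᵢ : i ∈ w}`. -/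
def specW (k : Type*) [CommSemiring k] {n : ℕ} (w : Set (Fin n)) :
    Set (Ideal (MvPolynomial (Fin n) k)) :=
  {P | P.IsPrime ∧ ∀ i, X i ∈ P ↔ i ∈ w}

/-- `max_w R = max R ∩ spec_w R`. -/
def maxW (k : Type*) [CommSemiring k] {n : ℕ} (w : Set (Fin n)) :
    Set (Ideal (MvPolynomial (Fin n) k)) :=
  {M | M.IsMaximal ∧ ∀ i, X i ∈ M ↔ i ∈ w}

/-- `𝒢-spec_w R = {(P : G_w) : P ∈ spec_w R}`. -/
def GspecW {k : Type*} [CommSemiring k] {n : ℕ}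
    (G : Set (Fin n) → Subgroup (Fin n → kˣ)) (w : Set (Fin n)) :
    Set (Ideal (MvPolynomial (Fin n) k)) :=
  {Q | ∃ P ∈ specW k w, Q = resT (G w) P}

/-- `𝒢-spec R`, the set of `𝒢`-prime ideals. -/
def GspecAll {k : Type*} [CommSemiring k] {n : ℕ}
    (G : Set (Fin n) → Subgroup (Fin n → kˣ)) :
    Set (Ideal (MvPolynomial (Fin n) k)) :=
  ⋃ w, GspecW G w

/-- `𝒢`-semiprime ideals: intersections of collections of `𝒢`-prime ideals. -/
def GSemiprime {k : Type*} [CommSemiring k] {n : ℕ}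
    (G : Set (Fin n) → Subgroup (Fin n → kˣ))
    (J : Ideal (MvPolynomial (Fin n) k)) : Prop :=
  ∃ T ⊆ GspecAll G, J = sInf T

/-- `𝒢-max_w R = {(M : G_w) : M ∈ max_w R}`. -/
def GmaxW {k : Type*} [CommSemiring k] {n : ℕ}
    (G : Set (Fin n) → Subgroup (Fin n → kˣ)) (w : Set (Fin n)) :
    Set (Ideal (MvPolynomial (Fin n) k)) :=
  {Q | ∃ M ∈ maxW k w, Q = resT (G w) M}

/-- `𝒢-max R`. -/
def GmaxAll {k : Type*} [CommSemiring k] {n : ℕ}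
    (G : Set (Fin n) → Subgroup (Fin n → kˣ)) :
    Set (Ideal (MvPolynomial (Fin n) k)) :=
  ⋃ w, GmaxW G w

/-- `P ↦ (P : 𝒢)`, i.e. `(P : G_w)` where `w = {i : yᵢ ∈ P}`. -/
noncomputable def Gquot {k : Type*} [CommSemiring k] {n : ℕ}
    (G : Set (Fin n) → Subgroup (Fin n → kˣ))
    (P : Ideal (MvPolynomial (Fin n) k)) : Ideal (MvPolynomial (Fin n) k) :=
  resT (G {i | X i ∈ P}) P

section Aux

variable {k : Type*} [CommSemiring k] {n : ℕ}

lemma tact_X (h : Fin n → kˣ) (i : Fin n) :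
    tact h (X i : MvPolynomial (Fin n) k) = (h i : k) • X i := by
  simp [tact]

lemma tact_tact (g h : Fin n → kˣ) (p : MvPolynomial (Fin n) k) :
    tact g (tact h p) = tact (h * g) p := by
  have : (tact g).comp (tact (k := k) h) = tact (h * g) := by
    apply MvPolynomial.algHom_ext
    intro i
    simp [tact_X, smul_smul, Units.val_mul]
  exact DFunLike.congr_fun this p

lemma tact_one_apply (p : MvPolynomial (Fin n) k) : tact (1 : Fin n → kˣ) p = p := by
  have : tact (1 : Fin n → kˣ) = AlgHom.id k (MvPolynomial (Fin n) k) := by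
    apply MvPolynomial.algHom_ext
    intro i
    simp [tact_X]
  rw [this]; rfl

lemma tact_surjective (h : Fin n → kˣ) :
    Function.Surjective (tact (k := k) (n := n) h) := fun p =>
  ⟨tact h⁻¹ p, by rw [tact_tact, inv_mul_cancel, tact_one_apply]⟩

lemma mem_resT {G' : Subgroup (Fin n → kˣ)} {I : Ideal (MvPolynomial (Fin n) k)}
    {x : MvPolynomial (Fin n) k} :
    x ∈ resT G' I ↔ ∀ g ∈ G', tact g x ∈ I := by
  simp [resT, Submodule.mem_iInf, Ideal.mem_comap]

lemma comap_tact_resT {G' : Subgroup (Fin n → kˣ)} {g : Fin n → kˣ} (hg : g ∈ G')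
    (I : Ideal (MvPolynomial (Fin n) k)) :
    Ideal.comap (tact g) (resT G' I) = resT G' I := by
  ext x
  simp only [Ideal.mem_comap, mem_resT, tact_tact]
  constructor
  · intro hx g' hg'
    have := hx (g⁻¹ * g') (mul_mem (inv_mem hg) hg')
    rwa [mul_inv_cancel_left] at this
  · intro hx g' hg'
    exact hx (g * g') (mul_mem hg hg')

lemma comap_resT (G' : Subgroup (Fin n → kˣ)) (h : Fin n → kˣ)
    (I : Ideal (MvPolynomial (Fin n) k)) :
    resT G' (Ideal.comap (tact h) I) = Ideal.comap (tact h) (resT G' I) := by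
  ext x
  simp only [Ideal.mem_comap, mem_resT, tact_tact]
  exact forall₂_congr fun g hg => by rw [mul_comm]

lemma resT_le_self (G' : Subgroup (Fin n → kˣ)) (I : Ideal (MvPolynomial (Fin n) k)) :
    resT G' I ≤ I := fun x hx => by
  have := mem_resT.1 hx 1 G'.one_mem
  rwa [tact_one_apply] at this

lemma X_mem_comap_tact (h : Fin n → kˣ) (I : Ideal (MvPolynomial (Fin n) k)) (i : Fin n) :
    X i ∈ Ideal.comap (tact h) I ↔ X i ∈ I := by
  rw [Ideal.mem_comap, tact_X, MvPolynomial.smul_eq_C_mul,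
    Ideal.unit_mul_mem_iff_mem _ ((h i).isUnit.map (C : k →+* MvPolynomial (Fin n) k))]

lemma X_mem_of_GspecW {G : Set (Fin n) → Subgroup (Fin n → kˣ)} {v : Set (Fin n)}
    {Q : Ideal (MvPolynomial (Fin n) k)} (hQ : Q ∈ GspecW G v) {i : Fin n} (hi : i ∈ v) :
    X i ∈ Q := by
  obtain ⟨P, ⟨hP, hPv⟩, rfl⟩ := hQ
  rw [mem_resT]
  intro g hg
  rw [tact_X, MvPolynomial.smul_eq_C_mul]
  exact Ideal.mul_mem_left _ _ ((hPv i).2 hi)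

end Aux

lemma key {k : Type*} [Field k] {n : ℕ}
    (G : Set (Fin n) → Subgroup (Fin n → kˣ))
    (hcompat : ∀ v w : Set (Fin n), v ⊆ w → ∀ P ∈ specW k w,
      resT (G v) P ≤ resT (G w) P)
    (T : Set (Ideal (MvPolynomial (Fin n) k))) (hT : T ⊆ GspecAll G)
    (P : Ideal (MvPolynomial (Fin n) k)) (hP : P.IsPrime) (hle : sInf T ≤ P) :
    sInf T ≤ resT (G {i | X i ∈ P}) P := by
  classical
  set w : Set (Fin n) := {i | X i ∈ P} with hw
  have hPw : P ∈ specW k w := ⟨hP, fun i => Iff.rfl⟩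
  set x : MvPolynomial (Fin n) k :=
    ∏ i ∈ Finset.univ.filter (fun i => i ∉ w), X i with hxdef
  haveI := hP
  have hxP : x ∉ P := by
    have hx : x ∈ P.primeCompl := Submonoid.prod_mem _ (fun i hi => by
      simp only [Finset.mem_filter] at hi
      exact hi.2)
    exact hx
  set Iv : Set (Fin n) → Ideal (MvPolynomial (Fin n) k) :=
    fun v => sInf (T ∩ GspecW G v) with hIvdef
  have hcover : ∀ f : MvPolynomial (Fin n) k, (∀ v ⊆ w, f ∈ Iv v) → f * x ∈ sInf T := by
    intro f hf
    rw [Ideal.mem_sInf]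
    intro Q hQ
    obtain ⟨v₀, hv₀⟩ := Set.mem_iUnion.1 (hT hQ)
    by_cases hsub : v₀ ⊆ w
    · have hfQ : f ∈ Q := Ideal.mem_sInf.1 (hf v₀ hsub) ⟨hQ, hv₀⟩
      exact Q.mul_mem_right _ hfQ
    · obtain ⟨i, hiv, hiw⟩ := Set.not_subset.1 hsub
      have hXiQ : X i ∈ Q := X_mem_of_GspecW hv₀ hiv
      obtain ⟨c, hc⟩ := Finset.dvd_prod_of_mem (fun i => (X i : MvPolynomial (Fin n) k))
        (by simp [hiw] : i ∈ Finset.univ.filter (fun i => i ∉ w))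
      rw [hxdef, hc]
      exact Q.mul_mem_left f (Q.mul_mem_right c hXiQ)
  have hinf : (Finset.univ.filter (fun v : Set (Fin n) => v ⊆ w)).inf Iv ≤ P := by
    intro f hf
    have hf' : ∀ v ⊆ w, f ∈ Iv v := fun v hv =>
      (Finset.inf_le (by simp [hv]) : _ ≤ Iv v) hf
    have hfx := hle (hcover f hf')
    exact (hP.mem_or_mem hfx).resolve_right hxP
  obtain ⟨v, hvmem, hvP⟩ := (Ideal.IsPrime.inf_le' hP).1 hinf
  have hvw : v ⊆ w := by simpa using hvmem
  have hstab : Iv v ≤ resT (G v) P := by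
    intro f hf
    rw [mem_resT]
    intro g hg
    apply hvP
    rw [hIvdef, Ideal.mem_sInf]
    rintro Q ⟨hQT, hQs⟩
    obtain ⟨P', hP', hPeq⟩ := hQs
    have hfQ : f ∈ resT (G v) P' := by
      rw [← hPeq]; exact Ideal.mem_sInf.1 hf ⟨hQT, ⟨P', hP', hPeq⟩⟩
    have : f ∈ Ideal.comap (tact g) (resT (G v) P') := by
      rw [comap_tact_resT hg]; exact hfQ
    rw [hPeq]
    exact Ideal.mem_comap.1 this
  exact le_trans (sInf_le_sInf Set.inter_subset_left)
    (le_trans hstab (hcompat v w hvw P hPw))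

lemma GmaxAll_subset_GspecAll {k : Type*} [Field k] {n : ℕ}
    (G : Set (Fin n) → Subgroup (Fin n → kˣ)) :
    GmaxAll (k := k) G ⊆ GspecAll G := by
  intro Q hQ
  obtain ⟨v, hv⟩ := Set.mem_iUnion.1 hQ
  obtain ⟨M, ⟨hM, hMv⟩, rfl⟩ := hv
  exact Set.mem_iUnion.2 ⟨v, M, ⟨hM.isPrime, hMv⟩, rfl⟩

/-- Proposition 2.5: `M ↦ (M : 𝒢)` is an `H`-equivariant topological
quotient map from `max R` onto `𝒢-max R`. -/
theorem stmt_10 {k : Type*} [Field k] {n : ℕ}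
    (G : Set (Fin n) → Subgroup (Fin n → kˣ))
    (hcompat : ∀ v w : Set (Fin n), v ⊆ w → ∀ P ∈ specW k w,
      resT (G v) P ≤ resT (G w) P) :
    -- well defined into 𝒢-max R, and surjective
    (∀ M : Ideal (MvPolynomial (Fin n) k), M.IsMaximal → Gquot G M ∈ GmaxAll G) ∧
    (∀ Q ∈ GmaxAll (k := k) G, ∃ M : Ideal (MvPolynomial (Fin n) k),
        M.IsMaximal ∧ Gquot G M = Q) ∧
    -- H-equivariance
    (∀ h : Fin n → kˣ, ∀ M : Ideal (MvPolynomial (Fin n) k), M.IsMaximal →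
        Gquot G (Ideal.comap (tact h) M) = Ideal.comap (tact h) (Gquot G M)) ∧
    -- quotient topology condition (relative topologies)
    (∀ V ⊆ GmaxAll (k := k) G,
        (∃ I : Ideal (MvPolynomial (Fin n) k), V = {Q | Q ∈ GmaxAll G ∧ I ≤ Q}) ↔
        (∃ I : Ideal (MvPolynomial (Fin n) k),
          {M | M.IsMaximal ∧ Gquot G M ∈ V} = {M | M.IsMaximal ∧ I ≤ M})) := by
  have part1 : ∀ M : Ideal (MvPolynomial (Fin n) k), M.IsMaximal → Gquot G M ∈ GmaxAll G := by
    intro M hM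
    exact Set.mem_iUnion.2 ⟨{i | X i ∈ M}, M, ⟨hM, fun i => Iff.rfl⟩, rfl⟩
  have part2 : ∀ Q ∈ GmaxAll (k := k) G, ∃ M : Ideal (MvPolynomial (Fin n) k),
      M.IsMaximal ∧ Gquot G M = Q := by
    intro Q hQ
    obtain ⟨v, hv⟩ := Set.mem_iUnion.1 hQ
    obtain ⟨M, ⟨hMmax, hMv⟩, rfl⟩ := hv
    refine ⟨M, hMmax, ?_⟩
    have hsets : {i | X i ∈ M} = v := Set.ext fun i => hMv i
    rw [Gquot, hsets]
  refine ⟨part1, part2, ?_, ?_⟩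
  · intro h M _
    have hsets : {i | X i ∈ Ideal.comap (tact h) M} = {i | X i ∈ M} :=
      Set.ext fun i => X_mem_comap_tact h M i
    rw [Gquot, Gquot, hsets, comap_resT]
  · intro V hV
    constructor
    · rintro ⟨I₀, hI₀⟩
      refine ⟨sInf V, ?_⟩
      ext M
      simp only [Set.mem_setOf_eq]
      constructor
      · rintro ⟨hMmax, hMV⟩
        exact ⟨hMmax, le_trans (sInf_le hMV) (resT_le_self _ _)⟩
      · rintro ⟨hMmax, hMle⟩
        refine ⟨hMmax, ?_⟩
        have hkey : sInf V ≤ Gquot G M :=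
          key G hcompat V (le_trans hV (GmaxAll_subset_GspecAll G)) M hMmax.isPrime hMle
        rw [hI₀]
        refine ⟨part1 M hMmax, ?_⟩
        have hI₀V : I₀ ≤ sInf V := le_sInf (fun Q hQ => by
          rw [hI₀] at hQ; exact hQ.2)
        exact le_trans hI₀V hkey
    · rintro ⟨I₀, hEq⟩
      refine ⟨sInf V, ?_⟩
      ext Q
      simp only [Set.mem_setOf_eq]
      constructor
      · intro hQV
        exact ⟨hV hQV, sInf_le hQV⟩
      · rintro ⟨hQG, hQle⟩
        obtain ⟨M, hMmax, hMQ⟩ := part2 Q hQG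
        have hI₀V : I₀ ≤ sInf V := by
          apply le_sInf
          intro Q₀ hQ₀
          obtain ⟨v, hv⟩ := Set.mem_iUnion.1 (hV hQ₀)
          obtain ⟨N, ⟨hNmax, hNv⟩, hQ₀eq⟩ := hv
          subst hQ₀eq
          intro f hf
          rw [mem_resT]
          intro g hg
          haveI := hNmax
          have hNg_max : (Ideal.comap (tact g) N).IsMaximal :=
            Ideal.comap_isMaximal_of_surjective (tact g) (tact_surjective g)
          have hNg_sets : {i | X i ∈ Ideal.comap (tact g) N} = v :=
            Set.ext fun i => (X_mem_comap_tact g N i).trans (hNv i)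
          have hNg_quot : Gquot G (Ideal.comap (tact g) N) = resT (G v) N := by
            rw [Gquot, hNg_sets, comap_resT, comap_tact_resT hg]
          have hNg_mem : Ideal.comap (tact g) N ∈
              {M | M.IsMaximal ∧ Gquot G M ∈ V} := by
            refine ⟨hNg_max, ?_⟩
            rw [hNg_quot]
            exact hQ₀
          rw [hEq] at hNg_mem
          exact Ideal.mem_comap.1 (hNg_mem.2 hf)
        have hQM : Q ≤ M := by
          rw [← hMQ]; exact resT_le_self _ _
        have hM_mem : M ∈ {M | M.IsMaximal ∧ I₀ ≤ M} :=
          ⟨hMmax, le_trans hI₀V (le_trans hQle hQM)⟩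
        rw [← hEq] at hM_mem
        rw [← hMQ]
        exact hM_mem.2
end
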